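/- arXiv:1109.2874 — 6 statements merged into one kernel-verified Lean document; each statement's English description precedes it below -/
import Mathlib

section
/- Let I, J be ideals on a set S and X a topological space. Suppose x ∈ X has a neighborhood U with U ≠ X, and suppose that every function f : S → X that is I^J-convergent to x is also I-convergent to x. Then J ⊆ I. -/
open scoped Classical

def IsIdeal {S : Type*} (I : Set (Set S)) : Prop :=
  (∅ : Set S) ∈ I ∧ (∀ A B : Set S, A ∈ I → B ∈ I → A ∪ B ∈ I) ∧
    (∀ A B : Set S, A ∈ I → B ⊆ A → B ∈ I)

def IConv {S X : Type*} [TopologicalSpace X] (I : Set (Set S)) (f : S → X) (x : X) : Prop :=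
  ∀ U ∈ nhds x, f ⁻¹' Uᶜ ∈ I

noncomputable def patch {S X : Type*} (M : Set S) (f : S → X) (x : X) : S → X :=
  fun s => if s ∈ M then f s else x

def IJConv {S X : Type*} [TopologicalSpace X] (I J : Set (Set S)) (f : S → X) (x : X) : Prop :=
  ∃ M : Set S, Mᶜ ∈ I ∧ IConv J (patch M f x) x

theorem stmt_8 {S X : Type*} [TopologicalSpace X] (I J : Set (Set S))
    (hI : IsIdeal I) (hJ : IsIdeal J)
    (x : X) (U : Set X) (hU : U ∈ nhds x) (hUne : U ≠ Set.univ)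
    (himp : ∀ f : S → X, IJConv I J f x → IConv I f x) : J ⊆ I := by
  intro A hA
  obtain ⟨y, hy⟩ : ∃ y, y ∉ U := by
    by_contra h
    push_neg at h
    exact hUne (Set.eq_univ_of_forall h)
  set f : S → X := fun s => if s ∈ A then y else x with hf
  have hIJ : IJConv I J f x := by
    refine ⟨Set.univ, by simpa using hI.1, ?_⟩
    intro V hV
    refine hJ.2.2 A _ hA ?_
    intro s hs
    simp only [patch, Set.mem_preimage, Set.mem_univ, if_true, Set.mem_compl_iff] at hs
    by_contra hsA
    simp [hf, hsA, mem_of_mem_nhds hV] at hs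
  have := himp f hIJ U hU
  refine hI.2.2 _ _ this ?_
  intro s hs
  simp [hf, Set.mem_preimage, hs, hy]
end

section
/- Let I and J be ideals on a set S. The following are equivalent: (1) for every sequence (Aₙ) of sets in I there exist sets Bₙ ∈ I with Aₙ △ Bₙ ∈ J for all n and ⋃ₙ Bₙ ∈ I; (2) for every sequence of pairwise disjoint sets (Aₙ) in I there exist sets Bₙ ∈ I with Aₙ △ Bₙ ∈ J for all n and ⋃ₙ Bₙ ∈ I. -/
open scoped Classical

theorem stmt_11 {S : Type*} (I J : Set (Set S)) (hI : IsIdeal I) (hJ : IsIdeal J) :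
    (∀ A : ℕ → Set S, (∀ n, A n ∈ I) →
      ∃ B : ℕ → Set S, (∀ n, B n ∈ I) ∧ (∀ n, symmDiff (A n) (B n) ∈ J) ∧ (⋃ n, B n) ∈ I) ↔
    (∀ A : ℕ → Set S, (∀ n, A n ∈ I) → (∀ m n, m ≠ n → Disjoint (A m) (A n)) →
      ∃ B : ℕ → Set S, (∀ n, B n ∈ I) ∧ (∀ n, symmDiff (A n) (B n) ∈ J) ∧ (⋃ n, B n) ∈ I) := by
  constructor
  · intro h A hA _
    exact h A hA
  · intro h A hA
    set A' : ℕ → Set S := fun n => A n \ ⋃ k < n, A k with hA'def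
    have hA'I : ∀ n, A' n ∈ I := fun n => hI.2.2 _ _ (hA n) Set.diff_subset
    have hdisj : ∀ m n, m ≠ n → Disjoint (A' m) (A' n) := by
      have key : ∀ m n, m < n → Disjoint (A' m) (A' n) := by
        intro m n hmn
        apply Set.disjoint_left.mpr
        intro x hxm hxn
        exact hxn.2 (Set.mem_biUnion hmn hxm.1)
      intro m n hmn
      rcases lt_or_gt_of_ne hmn with h' | h'
      · exact key m n h'
      · exact (key n m h').symm
    obtain ⟨B, hBI, hBJ, hBU⟩ := h A' hA'I hdisj
    have cover : ∀ n, ∀ x ∈ A n, ∃ k ≤ n, x ∈ A' k := by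
      intro n x hx
      have hex : ∃ k, x ∈ A k := ⟨n, hx⟩
      refine ⟨Nat.find hex, ?_, ?_, ?_⟩
      · exact Nat.find_le hx
      · exact Nat.find_spec hex
      · intro hmem
        obtain ⟨k, hk, hxk⟩ := Set.mem_iUnion₂.mp hmem
        exact Nat.find_min hex hk hxk
    refine ⟨fun n => A n ∩ ⋃ k ≤ n, B k,
      fun n => hI.2.2 _ _ (hA n) Set.inter_subset_left, ?_, ?_⟩
    · intro n
      have hfin : (⋃ k ≤ n, symmDiff (A' k) (B k)) ∈ J := by
        induction n with
        | zero => simpa [Nat.le_zero] using hBJ 0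
        | succ m ih =>
          rw [Set.biUnion_le_succ]
          exact hJ.2.1 _ _ ih (hBJ (m+1))
      refine hJ.2.2 _ _ hfin ?_
      intro x hx
      rw [Set.mem_symmDiff] at hx
      rcases hx with ⟨hxA, hxB⟩ | ⟨hxB, hxA⟩
      · have hxU : x ∉ ⋃ k ≤ n, B k := fun h' => hxB ⟨hxA, h'⟩
        obtain ⟨k, hk, hxk⟩ := cover n x hxA
        refine Set.mem_biUnion hk ?_
        rw [Set.mem_symmDiff]
        exact Or.inl ⟨hxk, fun hB => hxU (Set.mem_biUnion hk hB)⟩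
      · exact absurd hxB.1 hxA
    · refine hI.2.2 _ _ hBU ?_
      intro x hx
      obtain ⟨n, hxn⟩ := Set.mem_iUnion.mp hx
      obtain ⟨k, hk, hxk⟩ := Set.mem_iUnion₂.mp hxn.2
      exact Set.mem_iUnion.mpr ⟨k, hxk⟩
end

section
/- Let I and J be ideals on a set S. If for every nondecreasing sequence A₁ ⊆ A₂ ⊆ ⋯ of sets in I there exist sets Bₙ ∈ I with Aₙ △ Bₙ ∈ J for all n and ⋃ₙ Bₙ ∈ I, then for every sequence (Aₙ) of sets in I there is A ∈ I with Aₙ \ A ∈ J for all n. -/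
open scoped Classical

theorem stmt_12 {S : Type*} (I J : Set (Set S)) (hI : IsIdeal I) (hJ : IsIdeal J)
    (h : ∀ A : ℕ → Set S, (∀ n, A n ∈ I) → Monotone A →
      ∃ B : ℕ → Set S, (∀ n, B n ∈ I) ∧ (∀ n, symmDiff (A n) (B n) ∈ J) ∧ (⋃ n, B n) ∈ I) :
    ∀ A : ℕ → Set S, (∀ n, A n ∈ I) → ∃ A₀ ∈ I, ∀ n, A n \ A₀ ∈ J := by

  intro A hA
  set C : ℕ → Set S := fun n => ⋃ i ∈ Finset.range (n+1), A i with hC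
  have hCmem : ∀ n, C n ∈ I := by
    intro n
    induction n with
    | zero => simpa [C] using hA 0
    | succ k ih =>
      have : C (k+1) = C k ∪ A (k+1) := by
        simp only [C]; rw [Finset.range_add_one, Finset.set_biUnion_insert, Set.union_comm]
      rw [this]; exact hI.2.1 _ _ ih (hA (k+1))
  have hCmono : Monotone C := by
    intro m n hmn
    exact Set.biUnion_subset_biUnion_left
      (Finset.coe_subset.2 (Finset.range_subset_range.2 (by omega)))
  obtain ⟨B, hB, hSD, hU⟩ := h C hCmem hCmono
  refine ⟨⋃ n, B n, hU, fun n => ?_⟩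
  apply hJ.2.2 _ _ (hSD n)
  intro x hx
  have hxC : x ∈ C n := by
    apply Set.mem_biUnion (Finset.self_mem_range_succ n) hx.1
  have hxB : x ∉ B n := fun hb => hx.2 (Set.mem_iUnion.2 ⟨n, hb⟩)
  exact Or.inl ⟨hxC, hxB⟩
end

section
/- Let I, J be ideals on a set S and X a first countable topological space. If I has the additive property with respect to J (AP(I,J)), then every function f : S → X that is I-convergent to a point x is also I^J-convergent to x. -/
open scoped Classical

theorem stmt_14 {S X : Type*} [TopologicalSpace X] [FirstCountableTopology X]
    (I J : Set (Set S)) (hI : IsIdeal I) (hJ : IsIdeal J)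
    (hAP : ∀ A : ℕ → Set S, (∀ n, A n ∈ I) → ∃ A₀ ∈ I, ∀ n, A n \ A₀ ∈ J)
    (f : S → X) (x : X) (h : IConv I f x) : IJConv I J f x := by
  obtain ⟨U, hU⟩ := (nhds x).exists_antitone_basis
  have hAn : ∀ n, f ⁻¹' (U n)ᶜ ∈ I := fun n => h (U n) (hU.mem n)
  obtain ⟨A₀, hA₀I, hdiff⟩ := hAP _ hAn
  refine ⟨A₀ᶜ, by simpa using hA₀I, fun V hV => ?_⟩
  obtain ⟨n, hn⟩ := hU.toHasBasis.mem_iff.mp hV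
  refine hJ.2.2 _ _ (hdiff n) ?_
  intro s hs
  simp only [Set.mem_preimage, Set.mem_compl_iff, patch] at hs
  by_cases hsM : s ∈ A₀
  · rw [if_neg (by simpa using hsM)] at hs
    exact absurd (mem_of_mem_nhds hV) hs
  · rw [if_pos hsM] at hs
    exact ⟨fun hUn => hs (hn.2 hUn), hsM⟩
end

section
/- Let I, J be ideals on a set S, X a first countable topological space, and x ∈ X an accumulation point of X that does not have a smallest neighborhood (i.e., the intersection of all neighborhoods of x is not a neighborhood of x). If every function f : S → X that is I-convergent to x is also I^J-convergent to x, then I has the additive property with respect to J. -/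
open scoped Classical

/-- auxiliary increasing index sequence -/
noncomputable def seqIdx (Mf : ℕ → ℕ) : ℕ → ℕ
  | 0 => 0
  | k + 1 => max (seqIdx Mf k + 1) (Mf (seqIdx Mf k))

lemma seqIdx_lt_succ (Mf : ℕ → ℕ) (k : ℕ) : seqIdx Mf k < seqIdx Mf (k + 1) :=
  lt_of_lt_of_le (Nat.lt_succ_self _) (le_max_left _ _)

lemma seqIdx_Mf_le (Mf : ℕ → ℕ) (k : ℕ) : Mf (seqIdx Mf k) ≤ seqIdx Mf (k + 1) :=
  le_max_right _ _

lemma le_seqIdx (Mf : ℕ → ℕ) (k : ℕ) : k ≤ seqIdx Mf k := by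
  induction k with
  | zero => simp [seqIdx]
  | succ k ih => exact Nat.succ_le_of_lt (lt_of_le_of_lt ih (seqIdx_lt_succ Mf k))

lemma ideal_biUnion {S : Type*} {I : Set (Set S)} (hI : IsIdeal I) (C : ℕ → Set S)
    (hC : ∀ k, C k ∈ I) : ∀ j, (⋃ k ∈ Finset.range j, C k) ∈ I := by
  intro j
  induction j with
  | zero => simpa using hI.1
  | succ j ih =>
    rw [Finset.range_add_one, Finset.set_biUnion_insert]
    exact hI.2.1 _ _ (hC j) ih

theorem stmt_15 {S X : Type*} [TopologicalSpace X] [FirstCountableTopology X]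
    (I J : Set (Set S)) (hI : IsIdeal I) (hJ : IsIdeal J)
    (x : X) (hacc : ∀ U ∈ nhds x, ∃ y ∈ U, y ≠ x)
    (hnosmall : (⋂₀ {U : Set X | U ∈ nhds x}) ∉ nhds x)
    (himp : ∀ f : S → X, IConv I f x → IJConv I J f x) :
    ∀ A : ℕ → Set S, (∀ n, A n ∈ I) → ∃ A₀ ∈ I, ∀ n, A n \ A₀ ∈ J := by
  intro A hA
  obtain ⟨u, hu⟩ := (nhds x).exists_antitone_basis
  have humem : ∀ m, u m ∈ nhds x := fun m => hu.toHasBasis.mem_of_mem trivial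
  -- key escaping points
  have key : ∀ m, ∃ y, y ∈ u m ∧ ∃ m', y ∉ u m' := by
    intro m
    by_contra h
    push_neg at h
    apply hnosmall
    refine Filter.mem_of_superset (humem m) ?_
    intro y hy
    intro U hU
    obtain ⟨i, -, hi⟩ := hu.toHasBasis.mem_iff.mp hU
    exact hi (h y hy i)
  choose Y hY Mf hMf using key
  set nn : ℕ → ℕ := seqIdx Mf with hnn
  -- disjointified sets
  set B : ℕ → Set S := fun k => A k \ (⋃ j ∈ Finset.range k, A j) with hB
  have hBI : ∀ k, B k ∈ I := fun k => hI.2.2 _ _ (hA k) (Set.diff_subset)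
  have hBdisj : ∀ {j k : ℕ} {s : S}, s ∈ B j → s ∈ B k → j = k := by
    intro j k s hj hk
    by_contra hne
    rcases Nat.lt_or_ge j k with h | h
    · exact hk.2 (Set.mem_biUnion (Finset.mem_range.mpr h) hj.1)
    · have h' : k < j := lt_of_le_of_ne h (Ne.symm hne)
      exact hj.2 (Set.mem_biUnion (Finset.mem_range.mpr h') hk.1)
  -- test function
  set f : S → X := fun s => if h : ∃ k, s ∈ B k then Y (nn (Nat.find h)) else x with hf
  have hfB : ∀ {k : ℕ} {s : S}, s ∈ B k → f s = Y (nn k) := by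
    intro k s hs
    have h : ∃ k, s ∈ B k := ⟨k, hs⟩
    have : Nat.find h = k := hBdisj (Nat.find_spec h) hs
    simp only [hf, dif_pos h, this]
  -- f is I-convergent to x
  have hfconv : IConv I f x := by
    intro U hU
    obtain ⟨j, -, hj⟩ := hu.toHasBasis.mem_iff.mp hU
    refine hI.2.2 _ _ (ideal_biUnion hI B hBI j) ?_
    intro s hs
    simp only [Set.mem_preimage, Set.mem_compl_iff] at hs
    by_cases h : ∃ k, s ∈ B k
    · have hk := Nat.find_spec h
      set k := Nat.find h with hkdef
      have hfs : f s = Y (nn k) := hfB hk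
      have hklt : k < j := by
        by_contra hge
        push_neg at hge
        have hle : j ≤ nn k := le_trans hge (le_seqIdx Mf k)
        rw [hfs] at hs
        exact hs (hj (hu.antitone hle (hY (nn k))))
      exact Set.mem_biUnion (Finset.mem_range.mpr hklt) hk
    · exfalso
      have : f s = x := by simp only [hf, dif_neg h]
      exact hs (this ▸ mem_of_mem_nhds hU)
  obtain ⟨M, hM, hg⟩ := himp f hfconv
  refine ⟨Mᶜ, hM, ?_⟩
  intro n
  have hBM : ∀ k, B k ∩ M ∈ J := by
    intro k
    refine hJ.2.2 ((patch M f x) ⁻¹' (u (nn (k + 1)))ᶜ) _ (hg _ (humem _)) ?_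
    intro s hs
    have hpatch : patch M f x s = Y (nn k) := by
      have : patch M f x s = f s := if_pos hs.2
      rw [this, hfB hs.1]
    simp only [Set.mem_preimage, Set.mem_compl_iff, hpatch]
    intro hmem
    exact hMf (nn k) (hu.antitone (seqIdx_Mf_le Mf k) hmem)
  have hsub : A n \ Mᶜ ⊆ ⋃ k ∈ Finset.range (n + 1), (B k ∩ M) := by
    intro s hs
    have hsM : s ∈ M := by simpa using hs.2
    have h' : ∃ k, s ∈ A k := ⟨n, hs.1⟩
    have hk0 : Nat.find h' ≤ n := Nat.find_min' h' hs.1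
    have hsB : s ∈ B (Nat.find h') := by
      refine ⟨Nat.find_spec h', ?_⟩
      intro hmem
      obtain ⟨j, hj, hjs⟩ := Set.mem_iUnion₂.mp hmem
      exact Nat.find_min h' (Finset.mem_range.mp hj) hjs
    exact Set.mem_biUnion (Finset.mem_range.mpr (Nat.lt_succ_of_le hk0)) ⟨hsB, hsM⟩
  exact hJ.2.2 _ _ (ideal_biUnion hJ _ hBM (n + 1)) hsub
end

section
/- Let X be the topological space on ω₁ ∪ {ω₁} where every point α < ω₁ is isolated and the neighborhoods of ω₁ are generated by the sets U_α = {β : β > α} ∪ {ω₁} for α < ω₁. If I is an admissible ideal on ℕ and f : ℕ → X is I-convergent to ω₁, then there exists M with ℕ \ M ∈ I such that f(m) = ω₁ for all m ∈ M. -/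
open scoped Classical

noncomputable def omega1 : Ordinal := (Cardinal.aleph 1).ord

abbrev OmegaOneSpace := {o : Ordinal // o ≤ omega1}

noncomputable instance : TopologicalSpace OmegaOneSpace :=
  TopologicalSpace.generateFrom
    ({s | ∃ p : OmegaOneSpace, p.1 < omega1 ∧ s = {p}} ∪
     {s | ∃ α : Ordinal, α < omega1 ∧ s = {q : OmegaOneSpace | α < q.1}})

theorem stmt_16 (I : Set (Set ℕ)) (hI : IsIdeal I)
    (hadm : ∀ n : ℕ, {n} ∈ I)
    (f : ℕ → OmegaOneSpace)
    (hconv : IConv I f ⟨omega1, le_refl omega1⟩) :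
    ∃ M : Set ℕ, Mᶜ ∈ I ∧ ∀ m ∈ M, f m = ⟨omega1, le_refl omega1⟩ := by
  set g : ℕ → Ordinal := fun n => if (f n).1 < omega1 then (f n).1 else 0 with hg
  have hα : (⨆ n, g n) < omega1 := by
    rw [omega1]
    apply Cardinal.iSup_lt_ord_lift_of_isRegular Cardinal.isRegular_aleph_one
    · simpa using Cardinal.aleph0_lt_aleph_one
    · intro n
      rw [hg]
      dsimp only
      split
      · next h => exact h
      · rw [Cardinal.lt_ord]
        simpa using Cardinal.aleph_pos 1
  set α := ⨆ n, g n with hαdef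
  have hopen : IsOpen {q : OmegaOneSpace | α < q.1} :=
    TopologicalSpace.GenerateOpen.basic _ (Or.inr ⟨α, hα, rfl⟩)
  have hmem : (⟨omega1, le_refl omega1⟩ : OmegaOneSpace) ∈ {q : OmegaOneSpace | α < q.1} := hα
  have hnhds : {q : OmegaOneSpace | α < q.1} ∈ nhds (⟨omega1, le_refl omega1⟩ : OmegaOneSpace) :=
    hopen.mem_nhds hmem
  have hIc := hconv _ hnhds
  refine ⟨{n | f n = ⟨omega1, le_refl omega1⟩}, ?_, fun m hm => hm⟩
  apply hI.2.2 _ _ hIc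
  intro n hn
  simp only [Set.mem_compl_iff, Set.mem_setOf_eq] at hn ⊢
  have hlt : (f n).1 < omega1 := lt_of_le_of_ne (f n).2 (fun h => hn (Subtype.ext h))
  have : g n = (f n).1 := by simp [hg, hlt]
  have hle : (f n).1 ≤ α := this ▸ le_ciSup (Ordinal.bddAbove_range g) n
  exact fun h => absurd (h : α < (f n).1) (not_lt.mpr hle)
end
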